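/- arXiv:2510.24537 — 3 statements merged into one kernel-verified Lean document; each statement's English description precedes it below -/
import Mathlib

section
/- Let N ≥ 1, d = N(N+1)/2 and κ = 1/√2. For a ∈ ℝ and r > 0 define S(a,r) = sinh(a·r)/a if a ≠ 0 and S(0,r) = r. Then for every ς ∈ ℝ^N with ς₁² + ⋯ + ς_N² = 1 and every r > 0, writing κ_ij = (ς_i − ς_j)/2, one has r^{N−1} · ∏_{1 ≤ i < j ≤ N} S(κ_ij, r) ≤ (sinh(κ·r)/κ)^{d−1}. -/
noncomputable def Ssinh (a r : ℝ) : ℝ := if a = 0 then r else Real.sinh (a * r) / a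

lemma sinh_le_mul_cosh {x : ℝ} (hx : 0 ≤ x) : Real.sinh x ≤ x * Real.cosh x := by
  have hmono : MonotoneOn (fun x => x * Real.cosh x - Real.sinh x) (Set.Ici 0) := by
    apply monotoneOn_of_deriv_nonneg (convex_Ici 0)
    · fun_prop
    · intro y hy
      exact (((hasDerivAt_id y).mul (Real.hasDerivAt_cosh y)).sub
        (Real.hasDerivAt_sinh y)).differentiableAt.differentiableWithinAt
    · intro y hy
      rw [interior_Ici] at hy
      have : HasDerivAt (fun x => x * Real.cosh x - Real.sinh x)
          (1 * Real.cosh y + y * Real.sinh y - Real.cosh y) y :=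
        ((hasDerivAt_id y).mul (Real.hasDerivAt_cosh y)).sub (Real.hasDerivAt_sinh y)
      rw [this.deriv]
      have : 0 ≤ y * Real.sinh y := mul_nonneg hy.le (Real.sinh_nonneg_iff.2 hy.le)
      nlinarith
  have := hmono (Set.self_mem_Ici) hx hx
  simp only [Real.sinh_zero, Real.cosh_zero, zero_mul, sub_zero] at this
  linarith

lemma sinh_div_mono {x y : ℝ} (hx : 0 < x) (hxy : x ≤ y) :
    Real.sinh x / x ≤ Real.sinh y / y := by
  have hy : 0 < y := hx.trans_le hxy
  have hmono : MonotoneOn (fun x => Real.sinh x / x) (Set.Ioi 0) := by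
    apply monotoneOn_of_deriv_nonneg (convex_Ioi 0)
    · apply ContinuousOn.div Real.continuous_sinh.continuousOn continuousOn_id
      intro z hz; exact ne_of_gt hz
    · intro z hz
      rw [interior_Ioi] at hz
      exact ((Real.hasDerivAt_sinh z).div (hasDerivAt_id z)
        (ne_of_gt hz)).differentiableAt.differentiableWithinAt
    · intro z hz
      rw [interior_Ioi] at hz
      have hd : HasDerivAt (fun x => Real.sinh x / x)
          ((Real.cosh z * z - Real.sinh z * 1) / z ^ 2) z :=
        (Real.hasDerivAt_sinh z).div (hasDerivAt_id z) (ne_of_gt hz)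
      rw [hd.deriv]
      have h1 : Real.sinh z ≤ z * Real.cosh z := sinh_le_mul_cosh hz.le
      have h2 : (0:ℝ) < z ^ 2 := pow_pos hz 2
      apply div_nonneg _ h2.le
      nlinarith
  exact hmono hx (hx.trans_le hxy) hxy

lemma Ssinh_nonneg {a r : ℝ} (hr : 0 < r) : 0 ≤ Ssinh a r := by
  unfold Ssinh
  split_ifs with h
  · exact hr.le
  · rcases lt_or_gt_of_ne h with ha | ha
    · have h1 : Real.sinh (a * r) ≤ 0 :=
        Real.sinh_nonpos_iff.2 (mul_nonpos_of_nonpos_of_nonneg ha.le hr.le)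
      rw [div_nonneg_iff]
      exact Or.inr ⟨h1, ha.le⟩
    · exact div_nonneg (Real.sinh_nonneg_iff.2 (mul_nonneg ha.le hr.le)) ha.le

lemma Ssinh_le {a r κ : ℝ} (hr : 0 < r) (hκ : 0 < κ) (ha : |a| ≤ κ) :
    Ssinh a r ≤ Real.sinh (κ * r) / κ := by
  have hself : r ≤ Real.sinh (κ * r) / κ := by
    rw [le_div_iff₀ hκ]
    have := Real.self_le_sinh_iff.2 (mul_nonneg hκ.le hr.le)
    linarith
  have key : ∀ b : ℝ, 0 < b → b ≤ κ → Real.sinh (b * r) / b ≤ Real.sinh (κ * r) / κ := by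
    intro b hb hbκ
    have h := sinh_div_mono (mul_pos hb hr) (by nlinarith : b * r ≤ κ * r)
    calc Real.sinh (b * r) / b = (Real.sinh (b * r) / (b * r)) * r := by
          field_simp
      _ ≤ (Real.sinh (κ * r) / (κ * r)) * r := by
          exact mul_le_mul_of_nonneg_right h hr.le
      _ = Real.sinh (κ * r) / κ := by field_simp
  unfold Ssinh
  split_ifs with h
  · exact hself
  · rcases lt_or_gt_of_ne h with hneg | hpos
    · have habs : -a ≤ κ := by rwa [abs_of_neg hneg] at ha
      have := key (-a) (by linarith) habs
      rw [neg_mul, Real.sinh_neg, div_neg, neg_div, neg_neg] at this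
      · exact this
    · have habs : a ≤ κ := by rwa [abs_of_pos hpos] at ha
      exact key a hpos habs

lemma card_lt_pairs (N : ℕ) :
    2 * (Finset.univ.filter (fun q : Fin N × Fin N => q.1 < q.2)).card = N * N - N := by
  classical
  set s := Finset.univ.filter (fun q : Fin N × Fin N => q.1 < q.2) with hs
  set t := Finset.univ.filter (fun q : Fin N × Fin N => q.2 < q.1) with ht
  have hcard : s.card = t.card := by
    apply Finset.card_bij (fun q _ => q.swap)
    · intro q hq
      simp only [hs, ht, Finset.mem_filter, Finset.mem_univ, true_and] at *
      exact hq
    · intro q1 h1 q2 h2 h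
      exact Prod.swap_injective h
    · intro q hq
      refine ⟨q.swap, ?_, by simp⟩
      simp only [hs, ht, Finset.mem_filter, Finset.mem_univ, true_and] at *
      exact hq
  have hdisj : Disjoint s t := by
    rw [Finset.disjoint_left]
    intro q hqs hqt
    simp only [hs, ht, Finset.mem_filter, Finset.mem_univ, true_and] at hqs hqt
    exact absurd hqt (not_lt_of_gt hqs)
  have hunion : s ∪ t = (Finset.univ : Finset (Fin N × Fin N)).filter
      (fun q => q.1 ≠ q.2) := by
    ext q
    simp only [hs, ht, Finset.mem_union, Finset.mem_filter, Finset.mem_univ, true_and]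
    constructor
    · rintro (h | h)
      · exact ne_of_lt h
      · exact (ne_of_lt h).symm
    · intro h
      rcases lt_or_gt_of_ne h with h | h
      · exact Or.inl h
      · exact Or.inr h
  have hoff : ((Finset.univ : Finset (Fin N × Fin N)).filter (fun q => q.1 ≠ q.2)).card
      = N * N - N := by
    have : (Finset.univ : Finset (Fin N)).offDiag
        = (Finset.univ : Finset (Fin N × Fin N)).filter (fun q => q.1 ≠ q.2) := by
      ext q
      simp [Finset.mem_offDiag]
    rw [← this, Finset.offDiag_card]
    simp
  have := Finset.card_union_of_disjoint hdisj
  rw [hunion, hoff] at this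
  omega

/-- Bishop's volume comparison inequality for the space of `N × N` real covariance
matrices (dimension `d = N(N+1)/2`, curvature lower bound `-κ² = -1/2`). -/
theorem bishop_volume_comparison_spd {N : ℕ} (hN : 1 ≤ N)
    (ς : Fin N → ℝ) (hς : ∑ i, ς i ^ 2 = 1) (r : ℝ) (hr : 0 < r) :
    r ^ (N - 1) *
        ∏ q ∈ Finset.univ.filter (fun q : Fin N × Fin N => q.1 < q.2),
          Ssinh ((ς q.1 - ς q.2) / 2) r
      ≤ (Real.sinh ((1 / Real.sqrt 2) * r) / (1 / Real.sqrt 2)) ^ (N * (N + 1) / 2 - 1) := by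
  have h2 : (0:ℝ) < Real.sqrt 2 := Real.sqrt_pos.2 (by norm_num)
  set κ : ℝ := 1 / Real.sqrt 2 with hκdef
  have hκ : 0 < κ := by positivity
  set C : ℝ := Real.sinh (κ * r) / κ with hC
  have hrC : r ≤ C := by
    rw [hC, le_div_iff₀ hκ]
    have := Real.self_le_sinh_iff.2 (mul_nonneg hκ.le hr.le)
    linarith
  have hC0 : 0 < C := lt_of_lt_of_le hr hrC
  -- per-factor bound
  have hfac : ∀ q ∈ Finset.univ.filter (fun q : Fin N × Fin N => q.1 < q.2),
      Ssinh ((ς q.1 - ς q.2) / 2) r ≤ C := by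
    intro q hq
    simp only [Finset.mem_filter, Finset.mem_univ, true_and] at hq
    apply Ssinh_le hr hκ
    have hij : ς q.1 ^ 2 + ς q.2 ^ 2 ≤ 1 := by
      rw [← hς]
      have hsub : ({q.1, q.2} : Finset (Fin N)) ⊆ Finset.univ := Finset.subset_univ _
      have hne : q.1 ≠ q.2 := ne_of_lt hq
      calc ς q.1 ^ 2 + ς q.2 ^ 2 = ∑ i ∈ ({q.1, q.2} : Finset (Fin N)), ς i ^ 2 := by
            rw [Finset.sum_pair hne]
        _ ≤ ∑ i, ς i ^ 2 := Finset.sum_le_sum_of_subset_of_nonneg hsub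
            (fun i _ _ => sq_nonneg _)
    have hsq : ((ς q.1 - ς q.2) / 2) ^ 2 ≤ 1 / 2 := by nlinarith [sq_nonneg (ς q.1 + ς q.2)]
    have : |((ς q.1 - ς q.2) / 2)| ≤ κ := by
      rw [hκdef, ← Real.sqrt_sq_eq_abs]
      have : (1:ℝ) / Real.sqrt 2 = Real.sqrt (1/2) := by
        rw [show (1:ℝ)/2 = 2⁻¹ by norm_num, Real.sqrt_inv]
        simp [one_div]
      rw [this]
      exact Real.sqrt_le_sqrt hsq
    exact this
  have hK := card_lt_pairs N
  set K := (Finset.univ.filter (fun q : Fin N × Fin N => q.1 < q.2)).card with hKdef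
  have hprod : ∏ q ∈ Finset.univ.filter (fun q : Fin N × Fin N => q.1 < q.2),
      Ssinh ((ς q.1 - ς q.2) / 2) r ≤ C ^ K := by
    rw [← Finset.prod_const]
    exact Finset.prod_le_prod (fun q _ => Ssinh_nonneg hr) hfac
  have hmain : r ^ (N - 1) *
      (∏ q ∈ Finset.univ.filter (fun q : Fin N × Fin N => q.1 < q.2),
        Ssinh ((ς q.1 - ς q.2) / 2) r) ≤ C ^ (N - 1) * C ^ K := by
    apply mul_le_mul (pow_le_pow_left₀ hr.le hrC _) hprod
      (Finset.prod_nonneg (fun q _ => Ssinh_nonneg hr)) (by positivity)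
  have hexp : N - 1 + K = N * (N + 1) / 2 - 1 := by
    have h1 : N * (N + 1) = N * N + N := by ring
    have h2 : N ≤ N * N := Nat.le_mul_of_pos_left N (by omega)
    omega
  calc r ^ (N - 1) * ∏ q ∈ Finset.univ.filter (fun q : Fin N × Fin N => q.1 < q.2),
        Ssinh ((ς q.1 - ς q.2) / 2) r ≤ C ^ (N - 1) * C ^ K := hmain
    _ = C ^ (N - 1 + K) := (pow_add C (N-1) K).symm
    _ = C ^ (N * (N + 1) / 2 - 1) := by rw [hexp]
end

section
/- Let σ > 0, κ > 0 and let d ≥ 1 be an integer. Let Φ denote the standard normal cumulative distribution function, Φ(x) = ∫_{−∞}^{x} e^{−t²/2}/√(2π) dt. Then ∫₀^{∞} exp(−r²/(2σ²))·(sinh(κ·r)/κ)^{d−1} dr = (σ/(2κ)^{d−1}) · Σ_{j=0}^{d−1} (−1)^j · C(d−1, j) · √(2π) · exp((d−1−2j)²κ²σ²/2) · Φ((d−1−2j)·κ·σ), where C(d−1,j) denotes the binomial coefficient. -/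
open MeasureTheory Real Set


/-- The standard normal cumulative distribution function. -/
noncomputable def stdNormalCDF (x : ℝ) : ℝ :=
  ∫ t in Set.Iic x, Real.exp (-t ^ 2 / 2) / Real.sqrt (2 * Real.pi)

lemma complete_sq (σ : ℝ) (hσ : 0 < σ) (c r : ℝ) :
    Real.exp (-r ^ 2 / (2 * σ ^ 2) + c * r)
      = Real.exp (c ^ 2 * σ ^ 2 / 2) * Real.exp (-(2 * σ ^ 2)⁻¹ * (r - c * σ ^ 2) ^ 2) := by
  rw [← Real.exp_add]
  congr 1
  have h : (2 * σ ^ 2) ≠ 0 := by positivity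
  field_simp
  ring

lemma integrable_term (σ : ℝ) (hσ : 0 < σ) (c : ℝ) :
    Integrable (fun r => Real.exp (-r ^ 2 / (2 * σ ^ 2) + c * r)) := by
  have hb : (0:ℝ) < (2 * σ ^ 2)⁻¹ := by positivity
  have h := ((integrable_exp_neg_mul_sq hb).comp_sub_right (c * σ ^ 2)).const_mul
    (Real.exp (c ^ 2 * σ ^ 2 / 2))
  refine h.congr (Filter.Eventually.of_forall fun r => ?_)
  exact (complete_sq σ hσ c r).symm

lemma key (σ : ℝ) (hσ : 0 < σ) (c : ℝ) :
    ∫ r in Set.Ioi (0:ℝ), Real.exp (-r ^ 2 / (2 * σ ^ 2) + c * r)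
      = Real.sqrt (2 * Real.pi) * Real.exp (c ^ 2 * σ ^ 2 / 2) * σ
          * stdNormalCDF (c * σ) := by
  have h1 : ∫ r in Set.Ioi (0:ℝ), Real.exp (-r ^ 2 / (2 * σ ^ 2) + c * r)
      = Real.exp (c ^ 2 * σ ^ 2 / 2)
          * ∫ r in Set.Ioi (0:ℝ), Real.exp (-(2 * σ ^ 2)⁻¹ * (r - c * σ ^ 2) ^ 2) := by
    rw [← integral_const_mul]
    exact setIntegral_congr_fun measurableSet_Ioi fun r _ => complete_sq σ hσ c r
  -- shift
  have h2 : ∫ r in Set.Ioi (0:ℝ), Real.exp (-(2 * σ ^ 2)⁻¹ * (r - c * σ ^ 2) ^ 2)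
      = ∫ s in Set.Ioi (-(c * σ ^ 2)), Real.exp (-(2 * σ ^ 2)⁻¹ * s ^ 2) := by
    set g : ℝ → ℝ := (Set.Ioi (-(c * σ ^ 2))).indicator
      (fun s => Real.exp (-(2 * σ ^ 2)⁻¹ * s ^ 2)) with hg
    have e1 : ∀ r : ℝ, (Set.Ioi (0:ℝ)).indicator
        (fun r => Real.exp (-(2 * σ ^ 2)⁻¹ * (r - c * σ ^ 2) ^ 2)) r = g (r - c * σ ^ 2) := by
      intro r
      rw [hg]
      by_cases h : r ∈ Set.Ioi (0:ℝ)
      · rw [Set.indicator_of_mem h, Set.indicator_of_mem]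
        simpa using h
      · rw [Set.indicator_of_notMem h, Set.indicator_of_notMem]
        simp only [mem_Ioi] at h ⊢
        intro hc; exact h (by linarith)
    rw [← integral_indicator measurableSet_Ioi, ← integral_indicator measurableSet_Ioi]
    calc ∫ r, (Set.Ioi (0:ℝ)).indicator
          (fun r => Real.exp (-(2 * σ ^ 2)⁻¹ * (r - c * σ ^ 2) ^ 2)) r
        = ∫ r, g (r - c * σ ^ 2) := by simp_rw [e1]
      _ = ∫ s, g s := integral_sub_right_eq_self g (c * σ ^ 2)
  -- scale
  have h3 : ∫ s in Set.Ioi (-(c * σ ^ 2)), Real.exp (-(2 * σ ^ 2)⁻¹ * s ^ 2)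
      = σ * ∫ t in Set.Ioi (-(c * σ)), Real.exp (-t ^ 2 / 2) := by
    have := integral_comp_mul_left_Ioi (fun s => Real.exp (-(2 * σ ^ 2)⁻¹ * s ^ 2))
      (-(c * σ)) hσ
    have e : ∀ t : ℝ, Real.exp (-(2 * σ ^ 2)⁻¹ * (σ * t) ^ 2) = Real.exp (-t ^ 2 / 2) := by
      intro t; congr 1; field_simp
    simp_rw [e] at this
    rw [show σ * -(c * σ) = -(c * σ ^ 2) by ring] at this
    rw [this, smul_eq_mul]
    field_simp
  -- reflect
  have h4 : ∫ t in Set.Ioi (-(c * σ)), Real.exp (-t ^ 2 / 2)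
      = ∫ t in Set.Iic (c * σ), Real.exp (-t ^ 2 / 2) := by
    have := integral_comp_neg_Ioi (-(c * σ)) (fun t => Real.exp (-t ^ 2 / 2))
    simp only [neg_neg, neg_sq] at this ⊢
    rw [← this]
  have h5 : stdNormalCDF (c * σ)
      = (∫ t in Set.Iic (c * σ), Real.exp (-t ^ 2 / 2)) / Real.sqrt (2 * Real.pi) := by
    rw [stdNormalCDF, integral_div]
  rw [h1, h2, h3, h4, h5]
  have hs : Real.sqrt (2 * Real.pi) ≠ 0 := by positivity
  field_simp


/-- Closed form of the normalising constant (up to the sphere surface area) of the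
CURS proposal density for a Gaussian target on a `d`-dimensional manifold with
curvature lower bound `-κ²`. -/
theorem curs_proposal_normalising_constant (σ κ : ℝ) (hσ : 0 < σ) (hκ : 0 < κ)
    (d : ℕ) (hd : 1 ≤ d) :
    ∫ r in Set.Ioi (0 : ℝ),
        Real.exp (-r ^ 2 / (2 * σ ^ 2)) * (Real.sinh (κ * r) / κ) ^ (d - 1)
      = σ / (2 * κ) ^ (d - 1) *
          ∑ j ∈ Finset.range d,
            (-1 : ℝ) ^ j * (Nat.choose (d - 1) j : ℝ) * Real.sqrt (2 * Real.pi) *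
              Real.exp (((d : ℝ) - 1 - 2 * j) ^ 2 * κ ^ 2 * σ ^ 2 / 2) *
              stdNormalCDF (((d : ℝ) - 1 - 2 * j) * κ * σ) := by
  obtain ⟨n, rfl⟩ := Nat.exists_eq_add_of_le hd
  simp only [show 1 + n - 1 = n from by omega,
    show ((1 + n : ℕ) : ℝ) - 1 = (n : ℝ) from by push_cast; ring]
  have hpt : ∀ r : ℝ,
      Real.exp (-r ^ 2 / (2 * σ ^ 2)) * (Real.sinh (κ * r) / κ) ^ n
        = ∑ j ∈ Finset.range (1 + n),
            ((-1 : ℝ) ^ j * (Nat.choose n j : ℝ) / (2 * κ) ^ n) *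
              Real.exp (-r ^ 2 / (2 * σ ^ 2) + ((n : ℝ) - 2 * j) * κ * r) := by
    intro r
    have hsinh : Real.sinh (κ * r) / κ
        = (-Real.exp (-(κ * r)) + Real.exp (κ * r)) / (2 * κ) := by
      rw [Real.sinh_eq]; ring
    rw [hsinh, div_pow, add_pow, Finset.sum_div, Finset.mul_sum,
      show (1 + n) = n + 1 from by omega]
    refine Finset.sum_congr rfl fun j hj => ?_
    have hjn : j ≤ n := Nat.lt_succ_iff.mp (Finset.mem_range.mp hj)
    have hc : ((n - j : ℕ) : ℝ) = (n : ℝ) - j := by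
      push_cast [Nat.cast_sub hjn]; ring
    rw [neg_pow, ← Real.exp_nat_mul, ← Real.exp_nat_mul, hc,
      show -r ^ 2 / (2 * σ ^ 2) + ((n : ℝ) - 2 * j) * κ * r
        = -r ^ 2 / (2 * σ ^ 2) + ((j : ℝ) * -(κ * r) + ((n : ℝ) - j) * (κ * r)) from by ring,
      Real.exp_add, Real.exp_add]
    ring
  calc ∫ r in Set.Ioi (0 : ℝ),
        Real.exp (-r ^ 2 / (2 * σ ^ 2)) * (Real.sinh (κ * r) / κ) ^ n
      = ∫ r in Set.Ioi (0 : ℝ), ∑ j ∈ Finset.range (1 + n),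
            ((-1 : ℝ) ^ j * (Nat.choose n j : ℝ) / (2 * κ) ^ n) *
              Real.exp (-r ^ 2 / (2 * σ ^ 2) + ((n : ℝ) - 2 * j) * κ * r) :=
        setIntegral_congr_fun measurableSet_Ioi fun r _ => hpt r
    _ = ∑ j ∈ Finset.range (1 + n),
          ∫ r in Set.Ioi (0 : ℝ),
            ((-1 : ℝ) ^ j * (Nat.choose n j : ℝ) / (2 * κ) ^ n) *
              Real.exp (-r ^ 2 / (2 * σ ^ 2) + ((n : ℝ) - 2 * j) * κ * r) :=
        integral_finset_sum _ fun j _ =>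
          ((integrable_term σ hσ (((n : ℝ) - 2 * j) * κ)).const_mul _).restrict
    _ = ∑ j ∈ Finset.range (1 + n),
          ((-1 : ℝ) ^ j * (Nat.choose n j : ℝ) / (2 * κ) ^ n) *
            (Real.sqrt (2 * Real.pi) *
              Real.exp ((((n : ℝ) - 2 * j) * κ) ^ 2 * σ ^ 2 / 2) * σ *
              stdNormalCDF (((n : ℝ) - 2 * j) * κ * σ)) := by
        refine Finset.sum_congr rfl fun j _ => ?_
        rw [MeasureTheory.integral_const_mul, key σ hσ (((n : ℝ) - 2 * j) * κ)]
    _ = σ / (2 * κ) ^ n *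
          ∑ j ∈ Finset.range (1 + n),
            (-1 : ℝ) ^ j * (Nat.choose n j : ℝ) * Real.sqrt (2 * Real.pi) *
              Real.exp (((n : ℝ) - 2 * j) ^ 2 * κ ^ 2 * σ ^ 2 / 2) *
              stdNormalCDF (((n : ℝ) - 2 * j) * κ * σ) := by
        rw [Finset.mul_sum]
        refine Finset.sum_congr rfl fun j _ => ?_
        rw [mul_pow]
        ring
end

section
/- Let s be an N×N complex skew-Hermitian matrix (sᴴ = −s) whose eigenvalues are iς₁, …, iς_N with ς_k ∈ ℝ. The real-linear endomorphism of the real vector space of N×N complex skew-Hermitian matrices defined by u ↦ −[s,[s,u]] (where [a,b] = ab − ba) admits a basis of eigenvectors, orthonormal with respect to the real inner product ⟨u,v⟩ = Re tr(u·vᴴ), in which the eigenvalue 0 occurs exactly N times and, for each pair 1 ≤ k < l ≤ N, the eigenvalue (ς_k − ς_l)² occurs exactly twice. -/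
/-!
In an orthonormal eigenbasis `v` of `s`, the rank-one matrices `E k l = v k (v l)ᴴ` multiply like
matrix units, so they are orthonormal for `tr (A Bᴴ)`, and `[s, E k l] = i (ς k - ς l) E k l`.
Hence `i E k k`, `(E k l - E l k) / √2` and `i (E k l + E l k) / √2` (`k < l`) are orthonormal
skew-Hermitian eigenvectors of `u ↦ -[s, [s, u]]` with eigenvalues `0` and `(ς k - ς l)²`. They
span: a skew-Hermitian `u` is `∑ c k l • E k l` with `c l k = -conj (c k l)`, and each symmetrized
term `c • E k l - conj c • E l k` is a real combination of them.
-/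

open Matrix Complex

section Commutator

variable {R n : Type*} [Fintype n]

lemma Matrix.lie_vecMulVec_eq_smul [CommRing R] {s : Matrix n n R} {x w : n → R} {a b : R}
    (hx : s *ᵥ x = a • x) (hw : w ᵥ* s = b • w) :
    ⁅s, vecMulVec x w⁆ = (a - b) • vecMulVec x w := by
  rw [Ring.lie_def, mul_vecMulVec, vecMulVec_mul, hx, hw, smul_vecMulVec, vecMulVec_smul, sub_smul]

lemma Matrix.star_vecMul_eq_smul_of_conjTranspose_eq_neg [CommRing R] [StarRing R]
    {s : Matrix n n R} (hs : sᴴ = -s) {y : n → R} {μ : R} (hy : s *ᵥ y = μ • y) :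
    star y ᵥ* s = (-star μ) • star y := by
  have h := congrArg star (mulVec_conjTranspose s y)
  rw [star_star, hs, neg_mulVec, hy] at h
  rw [← h, star_neg, star_smul, neg_smul]

end Commutator

variable {n : Type*}

def matrixUnit (v : n → n → ℂ) (k l : n) : Matrix n n ℂ := vecMulVec (v k) (star (v l))

@[simp]
lemma conjTranspose_matrixUnit (v : n → n → ℂ) (k l : n) :
    (matrixUnit v k l)ᴴ = matrixUnit v l k := by
  simp [matrixUnit]

variable [Fintype n]

def radialCurvature (s : Matrix n n ℂ) : Module.End ℂ (Matrix n n ℂ) :=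
  -(LinearMap.mulLeft ℂ s - LinearMap.mulRight ℂ s) ^ 2

lemma radialCurvature_apply (s u : Matrix n n ℂ) : radialCurvature s u = -⁅s, ⁅s, u⁆⁆ := by
  simp [radialCurvature, sq, Ring.lie_def]

lemma matrixUnit_mul_mul_matrixUnit (v : n → n → ℂ) (u : Matrix n n ℂ) (k k' l' l : n) :
    matrixUnit v k k' * u * matrixUnit v l' l = (star (v k') ⬝ᵥ u *ᵥ v l') • matrixUnit v k l := by
  simp only [matrixUnit]
  rw [vecMulVec_mul, vecMulVec_mul_vecMulVec, vecMulVec_smul, dotProduct_mulVec]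

lemma matrixUnit_mem_eigenspace_radialCurvature {s : Matrix n n ℂ} (hs : sᴴ = -s)
    {v : n → n → ℂ} {ς : n → ℝ} (heig : ∀ k, s *ᵥ v k = (I * ς k) • v k) (k l : n) :
    matrixUnit v k l ∈ (radialCurvature s).eigenspace ((ς k - ς l) ^ 2 : ℝ) := by
  have hl : star (v l) ᵥ* s = (I * ς l) • star (v l) := by
    simpa using star_vecMul_eq_smul_of_conjTranspose_eq_neg hs (heig l)
  have hE := lie_vecMulVec_eq_smul (heig k) hl
  rw [Module.End.mem_eigenspace_iff, radialCurvature_apply, matrixUnit, hE, Ring.lie_def,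
    mul_smul_comm, smul_mul_assoc, ← smul_sub, ← Ring.lie_def, hE, smul_smul, ← neg_smul]
  congr 1
  push_cast
  linear_combination -((ς k : ℂ) - ς l) ^ 2 * I_sq

section Orthonormal

variable [DecidableEq n] {v : n → n → ℂ}
  (hv : ∀ k l, dotProduct (star (v k)) (v l) = if k = l then 1 else 0)
include hv

lemma matrixUnit_mul_matrixUnit (k l p q : n) :
    matrixUnit v k l * matrixUnit v p q = if l = p then matrixUnit v k q else 0 := by
  rw [matrixUnit, matrixUnit, vecMulVec_mul_vecMulVec, hv]
  split_ifs <;> simp [matrixUnit]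

lemma trace_matrixUnit (k l : n) : trace (matrixUnit v k l) = if l = k then 1 else 0 := by
  rw [matrixUnit, trace_vecMulVec, dotProduct_comm, hv]

lemma trace_matrixUnit_mul_matrixUnit (k l p q : n) :
    trace (matrixUnit v k l * matrixUnit v p q) = if l = p ∧ q = k then 1 else 0 := by
  rw [matrixUnit_mul_matrixUnit hv]
  split_ifs <;> simp_all [trace_matrixUnit hv]

lemma sum_matrixUnit_self : ∑ k, matrixUnit v k k = 1 := by
  let V : Matrix n n ℂ := Matrix.of fun i k => v k i
  have hV : Vᴴ * V = 1 := by
    ext k l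
    simpa [V, mul_apply, one_apply, dotProduct] using hv k l
  rw [← mul_eq_one_comm.mp hV]
  ext i j
  simp [V, matrixUnit, mul_apply, Matrix.sum_apply, vecMulVec_apply]

lemma eq_sum_smul_matrixUnit (u : Matrix n n ℂ) :
    u = ∑ k, ∑ l, (star (v k) ⬝ᵥ u *ᵥ v l) • matrixUnit v k l := by
  conv_lhs => rw [← one_mul u, ← mul_one (1 * u), ← sum_matrixUnit_self hv, Finset.sum_mul,
    Finset.sum_mul]
  simp only [Finset.mul_sum, matrixUnit_mul_mul_matrixUnit]

end Orthonormal

section Basis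

variable [LinearOrder n]

def curvatureEigenvalue (ς : n → ℝ) : n ⊕ ({q : n × n // q.1 < q.2} × Fin 2) → ℝ :=
  Sum.elim (fun _ => 0) fun q => (ς q.1.1.1 - ς q.1.1.2) ^ 2

noncomputable def skewHermitianBasis (v : n → n → ℂ) :
    n ⊕ ({q : n × n // q.1 < q.2} × Fin 2) → Matrix n n ℂ
  | .inl k => I • matrixUnit v k k
  | .inr (q, 0) => (√2)⁻¹ • (matrixUnit v q.1.1 q.1.2 - matrixUnit v q.1.2 q.1.1)
  | .inr (q, 1) => (√2)⁻¹ • (I • (matrixUnit v q.1.1 q.1.2 + matrixUnit v q.1.2 q.1.1))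

omit [Fintype n] in
lemma conjTranspose_skewHermitianBasis (v : n → n → ℂ)
    (i : n ⊕ ({q : n × n // q.1 < q.2} × Fin 2)) :
    (skewHermitianBasis v i)ᴴ = -skewHermitianBasis v i := by
  rcases i with k | ⟨q, j⟩
  · simp [skewHermitianBasis]
  · fin_cases j <;> simp [skewHermitianBasis, smul_sub, smul_add, add_comm]

lemma skewHermitianBasis_mem_eigenspace_radialCurvature {s : Matrix n n ℂ} (hs : sᴴ = -s)
    {v : n → n → ℂ} {ς : n → ℝ} (heig : ∀ k, s *ᵥ v k = (I * ς k) • v k)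
    (i : n ⊕ ({q : n × n // q.1 < q.2} × Fin 2)) :
    skewHermitianBasis v i ∈ (radialCurvature s).eigenspace (curvatureEigenvalue ς i : ℂ) := by
  have hE := matrixUnit_mem_eigenspace_radialCurvature hs heig
  rcases i with k | ⟨⟨⟨k, l⟩, hkl⟩, j⟩
  · convert Submodule.smul_mem _ I (hE k k) using 2 <;>
      simp [curvatureEigenvalue, skewHermitianBasis]
  · have hlk : matrixUnit v l k ∈ (radialCurvature s).eigenspace ((ς k - ς l) ^ 2 : ℝ) := by
      simpa only [← neg_sub (ς k), neg_sq] using hE l k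
    fin_cases j
    · exact Submodule.smul_of_tower_mem _ _ (sub_mem (hE k l) hlk)
    · exact Submodule.smul_of_tower_mem _ _ (Submodule.smul_mem _ _ (add_mem (hE k l) hlk))

omit [Fintype n] in
lemma smul_matrixUnit_sub_star_smul_mem_span (v : n → n → ℂ) (c : ℂ) (k l : n) :
    c • matrixUnit v k l - star c • matrixUnit v l k ∈
      Submodule.span ℝ (Set.range (skewHermitianBasis v)) := by
  have offDiag (c : ℂ) (q : {q : n × n // q.1 < q.2}) :
      c • matrixUnit v q.1.1 q.1.2 - star c • matrixUnit v q.1.2 q.1.1 ∈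
        Submodule.span ℝ (Set.range (skewHermitianBasis v)) := by
    have h : (√2)⁻¹ • (c • matrixUnit v q.1.1 q.1.2 - star c • matrixUnit v q.1.2 q.1.1) =
        c.re • skewHermitianBasis v (.inr (q, 0)) + c.im • skewHermitianBasis v (.inr (q, 1)) := by
      simp only [skewHermitianBasis]
      rw [← re_add_im c]
      simp only [star_add, star_mul', conj_ofReal, star_def, conj_I, ofReal_re, ofReal_im,
        add_re, add_im, mul_re, mul_im, I_re, I_im]
      simp only [← Complex.coe_smul]
      module
    rw [← Submodule.smul_mem_iff _ (by positivity : (√2)⁻¹ ≠ 0), h]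
    exact add_mem (Submodule.smul_mem _ _ (Submodule.subset_span ⟨_, rfl⟩))
      (Submodule.smul_mem _ _ (Submodule.subset_span ⟨_, rfl⟩))
  rcases lt_trichotomy k l with hkl | rfl | hlk
  · exact offDiag c ⟨(k, l), hkl⟩
  · have h : c • matrixUnit v k k - star c • matrixUnit v k k =
        (2 * c.im) • skewHermitianBasis v (.inl k) := by
      rw [← sub_smul, star_def, sub_conj, skewHermitianBasis, ← Complex.coe_smul, smul_smul]
    rw [h]
    exact Submodule.smul_mem _ _ (Submodule.subset_span ⟨_, rfl⟩)
  · convert neg_mem (offDiag (star c) ⟨(l, k), hlk⟩) using 1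
    simp only [star_star, neg_sub]

variable {v : n → n → ℂ}
  (hv : ∀ k l, dotProduct (star (v k)) (v l) = if k = l then 1 else 0)
include hv

lemma re_trace_skewHermitianBasis_mul_conjTranspose
    (i j : n ⊕ ({q : n × n // q.1 < q.2} × Fin 2)) :
    (trace (skewHermitianBasis v i * (skewHermitianBasis v j)ᴴ)).re = if i = j then 1 else 0 := by
  have h2 : ((√2 : ℂ))⁻¹ * (√2 : ℂ)⁻¹ = 2⁻¹ := by
    rw [← mul_inv, ← ofReal_mul, Real.mul_self_sqrt zero_le_two, ofReal_ofNat]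
  rcases i with k | ⟨⟨⟨k₁, k₂⟩, hk⟩, a⟩ <;> rcases j with l | ⟨⟨⟨l₁, l₂⟩, hl⟩, b⟩ <;>
    (try fin_cases a) <;> (try fin_cases b) <;>
    simp [skewHermitianBasis, Matrix.mul_sub, Matrix.sub_mul, Matrix.mul_add, Matrix.add_mul,
      trace_matrixUnit_mul_matrixUnit hv, smul_sub, smul_add] <;>
    split_ifs <;> simp [h2] <;> grind

lemma mem_span_skewHermitianBasis {u : Matrix n n ℂ} (hu : uᴴ = -u) :
    u ∈ Submodule.span ℝ (Set.range (skewHermitianBasis v)) := by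
  set c : n → n → ℂ := fun k l => star (v k) ⬝ᵥ u *ᵥ v l
  have hc (k l : n) : star (c k l) = -c l k := by
    simp only [c, ← star_dotProduct, star_mulVec, ← dotProduct_mulVec, hu, neg_mulVec,
      dotProduct_neg]
  have hsum : ∑ k, ∑ l, (2⁻¹ : ℝ) • (c k l • matrixUnit v k l - star (c k l) • matrixUnit v l k)
      = u := by
    simp only [hc, neg_smul, sub_neg_eq_add, ← Finset.smul_sum, Finset.sum_add_distrib]
    rw [Finset.sum_comm (f := fun k l => c l k • matrixUnit v l k), ← eq_sum_smul_matrixUnit hv,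
      ← two_smul ℝ u, smul_smul]
    norm_num
  rw [← hsum]
  exact Submodule.sum_mem _ fun k _ => Submodule.sum_mem _ fun l _ =>
    Submodule.smul_mem _ _ (smul_matrixUnit_sub_star_smul_mem_span v _ k l)

end Basis

/-- The operator `u ↦ -[s,[s,u]]` on the real vector space of `N × N` complex
skew-Hermitian matrices, for `s` skew-Hermitian with eigenvalues `i ς k`, admits
an orthonormal eigenbasis (for the inner product `Re tr(u vᴴ)`) in which the
eigenvalue `0` occurs exactly `N` times and each eigenvalue `(ς k - ς l)²`
(for `k < l`) occurs exactly twice. -/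
theorem radial_curvature_eigenbasis_unitaryGroup
    {N : ℕ} (s : Matrix (Fin N) (Fin N) ℂ) (hs : sᴴ = -s)
    (ς : Fin N → ℝ) (v : Fin N → (Fin N → ℂ))
    (hv : ∀ k l, dotProduct (star (v k)) (v l) = if k = l then 1 else 0)
    (heig : ∀ k, s.mulVec (v k) = (Complex.I * (ς k : ℂ)) • v k) :
    ∃ b : (Fin N ⊕ ({q : Fin N × Fin N // q.1 < q.2} × Fin 2)) →
        Matrix (Fin N) (Fin N) ℂ,
      (∀ k, (b k)ᴴ = -(b k)) ∧
      (∀ k l, (Matrix.trace (b k * (b l)ᴴ)).re = if k = l then 1 else 0) ∧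
      (∀ k, -⁅s, ⁅s, b k⁆⁆ =
        (Sum.elim (fun _ => (0 : ℝ))
          (fun q => (ς q.1.1.1 - ς q.1.1.2) ^ 2) k) • b k) ∧
      (∀ u : Matrix (Fin N) (Fin N) ℂ, uᴴ = -u →
        u ∈ Submodule.span ℝ (Set.range b)) := by
  refine ⟨skewHermitianBasis v, conjTranspose_skewHermitianBasis v,
    re_trace_skewHermitianBasis_mul_conjTranspose hv, fun i => ?_,
    fun u hu => mem_span_skewHermitianBasis hv hu⟩
  have h := skewHermitianBasis_mem_eigenspace_radialCurvature hs heig i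
  rwa [Module.End.mem_eigenspace_iff, radialCurvature_apply, Complex.coe_smul] at h
end
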